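/- Let U ⊆ ℝ² be open, let X : U → ℝ³ be twice continuously differentiable with harmonic components ∂₁∂₁X + ∂₂∂₂X = 0 and conformal: ⟨∂ᵢX, ∂ⱼX⟩ = E δᵢⱼ on U with E > 0. Let n : U → ℝ³ be twice continuously differentiable with ‖n‖ ≡ 1 and ⟨n, ∂ⱼX⟩ ≡ 0 for j = 1, 2, and let K : U → ℝ satisfy Δnᵏ = 2 K E nᵏ on U for k = 1, 2, 3. Then the support function u := ⟨X, n⟩ satisfies Δu = 2 K E u on U; that is, u lies in the kernel of the Jacobi operator L_g = Δ_g − 2K_g of the area functional. -/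

import Mathlib

open scoped RealInnerProductSpace Topology

/-!
Expanding by the product rule,
`Δ⟨X, n⟩ = ⟨ΔX, n⟩ + 2 ∑ⱼ ⟨∂ⱼX, ∂ⱼn⟩ + ⟨X, Δn⟩`.
The first term vanishes because `X` is harmonic. Differentiating `⟨n, ∂ⱼX⟩ = 0` in the
direction `j` gives `⟨∂ⱼn, ∂ⱼX⟩ = -⟨n, ∂ⱼ∂ⱼX⟩`, so the middle sum is `-⟨n, ΔX⟩ = 0` as well.
The last term is `2KE⟨X, n⟩` componentwise.
-/

/-- The partial derivative in the `j`-th coordinate direction of a map defined on `ℝ²`. -/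
noncomputable def pd {F : Type*} [NormedAddCommGroup F] [NormedSpace ℝ F]
    (j : Fin 2) (X : EuclideanSpace ℝ (Fin 2) → F) (u : EuclideanSpace ℝ (Fin 2)) : F :=
  fderiv ℝ X u (EuclideanSpace.single j 1)

/-- The flat Laplacian `Δ = ∂₁∂₁ + ∂₂∂₂` of a real-valued function on `ℝ²`. -/
noncomputable def flatLap (f : EuclideanSpace ℝ (Fin 2) → ℝ)
    (u : EuclideanSpace ℝ (Fin 2)) : ℝ :=
  pd 0 (pd 0 f) u + pd 1 (pd 1 f) u

section PartialDerivatives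

variable {F : Type*} [NormedAddCommGroup F] {ι : Type*} [Fintype ι] {u : EuclideanSpace ℝ (Fin 2)}

lemma ContDiffAt.contDiffAt_pd [NormedSpace ℝ F] {f : EuclideanSpace ℝ (Fin 2) → F}
    {m : ℕ∞} (j : Fin 2) (hf : ContDiffAt ℝ (m + 1) f u) : ContDiffAt ℝ m (pd j f) u :=
  (hf.fderiv_right le_rfl).clm_apply contDiffAt_const

lemma ContDiffAt.differentiableAt_pd [NormedSpace ℝ F] {f : EuclideanSpace ℝ (Fin 2) → F}
    (j : Fin 2) (hf : ContDiffAt ℝ 2 f u) : DifferentiableAt ℝ (pd j f) u :=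
  (hf.contDiffAt_pd (m := 1) j).differentiableAt one_ne_zero

lemma ContDiffAt.eventually_differentiableAt [NormedSpace ℝ F]
    {f : EuclideanSpace ℝ (Fin 2) → F} (hf : ContDiffAt ℝ 2 f u) :
    ∀ᶠ w in 𝓝 u, DifferentiableAt ℝ f w :=
  (hf.eventually (by norm_num)).mono fun _ hw => hw.differentiableAt two_ne_zero

lemma pd_add [NormedSpace ℝ F] {f g : EuclideanSpace ℝ (Fin 2) → F} (j : Fin 2)
    (hf : DifferentiableAt ℝ f u) (hg : DifferentiableAt ℝ g u) :
    pd j (fun w => f w + g w) u = pd j f u + pd j g u := by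
  simp only [pd, fderiv_fun_add hf hg, add_apply]

lemma pd_inner [InnerProductSpace ℝ F] {f g : EuclideanSpace ℝ (Fin 2) → F} (j : Fin 2)
    (hf : DifferentiableAt ℝ f u) (hg : DifferentiableAt ℝ g u) :
    pd j (fun w => ⟪f w, g w⟫) u = ⟪f u, pd j g u⟫ + ⟪pd j f u, g u⟫ :=
  fderiv_inner_apply (𝕜 := ℝ) hf hg _

lemma pd_apply {f : EuclideanSpace ℝ (Fin 2) → EuclideanSpace ℝ ι}
    (j : Fin 2) (k : ι) (hf : DifferentiableAt ℝ f u) :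
    pd j (fun w => f w k) u = pd j f u k := by
  change fderiv ℝ (EuclideanSpace.proj k ∘ f) u _ = _
  rw [fderiv_comp _ (EuclideanSpace.proj k).differentiableAt hf,
    ContinuousLinearMap.fderiv]
  rfl

lemma pd_pd_apply {f : EuclideanSpace ℝ (Fin 2) → EuclideanSpace ℝ ι}
    (j : Fin 2) (k : ι) (hf : ContDiffAt ℝ 2 f u) :
    pd j (pd j fun w => f w k) u = pd j (pd j f) u k := by
  have hpd : pd j (fun w => f w k) =ᶠ[𝓝 u] fun w => pd j f w k :=
    hf.eventually_differentiableAt.mono fun w hw => pd_apply j k hw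
  rw [pd, hpd.fderiv_eq, ← pd, pd_apply j k (hf.differentiableAt_pd j)]

lemma pd_pd_inner [InnerProductSpace ℝ F] {f g : EuclideanSpace ℝ (Fin 2) → F} (j : Fin 2)
    (hf : ContDiffAt ℝ 2 f u) (hg : ContDiffAt ℝ 2 g u) :
    pd j (pd j fun w => ⟪f w, g w⟫) u =
      ⟪f u, pd j (pd j g) u⟫ + 2 * ⟪pd j f u, pd j g u⟫ + ⟪pd j (pd j f) u, g u⟫ := by
  have hfd := hf.differentiableAt two_ne_zero
  have hgd := hg.differentiableAt two_ne_zero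
  have hpd : pd j (fun w => ⟪f w, g w⟫) =ᶠ[𝓝 u]
      fun w => ⟪f w, pd j g w⟫ + ⟪pd j f w, g w⟫ :=
    (hf.eventually_differentiableAt.and hg.eventually_differentiableAt).mono
      fun w hw => pd_inner j hw.1 hw.2
  rw [pd, hpd.fderiv_eq, ← pd,
    pd_add j (hfd.inner ℝ (hg.differentiableAt_pd j)) ((hf.differentiableAt_pd j).inner ℝ hgd),
    pd_inner j hfd (hg.differentiableAt_pd j), pd_inner j (hf.differentiableAt_pd j) hgd,
    real_inner_comm (pd j g u)]
  ring

lemma inner_pd_pd_eq_neg_of_inner_pd_eq_zero [InnerProductSpace ℝ F]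
    {n X : EuclideanSpace ℝ (Fin 2) → F} (j : Fin 2) (hn : DifferentiableAt ℝ n u)
    (hX : ContDiffAt ℝ 2 X u) (hperp : (fun w => ⟪n w, pd j X w⟫) =ᶠ[𝓝 u] fun _ => 0) :
    ⟪pd j X u, pd j n u⟫ = -⟪n u, pd j (pd j X) u⟫ := by
  have hzero : pd j (fun w => ⟪n w, pd j X w⟫) u = 0 := by
    rw [pd, hperp.fderiv_eq, fderiv_const_apply, zero_apply]
  rw [pd_inner j hn (hX.differentiableAt_pd j), real_inner_comm (pd j X u)] at hzero
  linarith

lemma flatLap_inner [InnerProductSpace ℝ F] {f g : EuclideanSpace ℝ (Fin 2) → F}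
    (hf : ContDiffAt ℝ 2 f u) (hg : ContDiffAt ℝ 2 g u) :
    flatLap (fun w => ⟪f w, g w⟫) u =
      ⟪f u, pd 0 (pd 0 g) u + pd 1 (pd 1 g) u⟫
        + 2 * (⟪pd 0 f u, pd 0 g u⟫ + ⟪pd 1 f u, pd 1 g u⟫)
        + ⟪pd 0 (pd 0 f) u + pd 1 (pd 1 f) u, g u⟫ := by
  rw [flatLap, pd_pd_inner 0 hf hg, pd_pd_inner 1 hf hg, inner_add_left, inner_add_right]
  ring

lemma flatLap_apply {f : EuclideanSpace ℝ (Fin 2) → EuclideanSpace ℝ ι}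
    (k : ι) (hf : ContDiffAt ℝ 2 f u) :
    flatLap (fun w => f w k) u = (pd 0 (pd 0 f) u + pd 1 (pd 1 f) u) k := by
  rw [flatLap, pd_pd_apply 0 k hf, pd_pd_apply 1 k hf, PiLp.add_apply]

end PartialDerivatives

theorem support_function_is_jacobi_field_general
    {U : Set (EuclideanSpace ℝ (Fin 2))} (hU : IsOpen U)
    (X : EuclideanSpace ℝ (Fin 2) → EuclideanSpace ℝ (Fin 3))
    (hC : ContDiffOn ℝ 2 X U)
    (hharm : ∀ u ∈ U, pd 0 (pd 0 X) u + pd 1 (pd 1 X) u = 0)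
    (E : EuclideanSpace ℝ (Fin 2) → ℝ)
    (n : EuclideanSpace ℝ (Fin 2) → EuclideanSpace ℝ (Fin 3))
    (hn : ContDiffOn ℝ 2 n U)
    (hperp : ∀ u ∈ U, ∀ j : Fin 2, ⟪n u, pd j X u⟫ = 0)
    (K : EuclideanSpace ℝ (Fin 2) → ℝ)
    (hjac : ∀ u ∈ U, ∀ k : Fin 3,
      flatLap (fun w => n w k) u = 2 * K u * E u * n u k) :
    ∀ u ∈ U,
      flatLap (fun w => ⟪X w, n w⟫) u = 2 * K u * E u * ⟪X u, n u⟫ := by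
  intro u hu
  have hXu : ContDiffAt ℝ 2 X u := hC.contDiffAt (hU.mem_nhds hu)
  have hnu : ContDiffAt ℝ 2 n u := hn.contDiffAt (hU.mem_nhds hu)
  have hcross (j : Fin 2) : ⟪pd j X u, pd j n u⟫ = -⟪n u, pd j (pd j X) u⟫ :=
    inner_pd_pd_eq_neg_of_inner_pd_eq_zero j (hnu.differentiableAt two_ne_zero) hXu
      (Filter.eventuallyEq_of_mem (hU.mem_nhds hu) fun w hw => hperp w hw j)
  have hlap_n : pd 0 (pd 0 n) u + pd 1 (pd 1 n) u = (2 * K u * E u) • n u := by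
    ext k
    rw [← flatLap_apply k hnu, hjac u hu k, PiLp.smul_apply, smul_eq_mul]
  rw [flatLap_inner hXu hnu, hcross, hcross, ← neg_add, ← inner_add_right, hharm u hu,
    hlap_n, inner_smul_right, inner_zero_left, inner_zero_right]
  ring

/-- (Lemma 3.3 of the paper, in coordinates.) For a conformally
parametrized minimal surface `X` with conformal factor `E`, Gauss curvature `K`, and
unit normal `n` whose components are Jacobi fields (`Δnᵏ = 2KEnᵏ`), the support
function `u = ⟨X, n⟩` is a Jacobi field: `Δ⟨X, n⟩ = 2KE⟨X, n⟩`. -/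
theorem support_function_is_jacobi_field
    {U : Set (EuclideanSpace ℝ (Fin 2))} (hU : IsOpen U)
    (X : EuclideanSpace ℝ (Fin 2) → EuclideanSpace ℝ (Fin 3))
    (hC : ContDiffOn ℝ 2 X U)
    (hharm : ∀ u ∈ U, pd 0 (pd 0 X) u + pd 1 (pd 1 X) u = 0)
    (E : EuclideanSpace ℝ (Fin 2) → ℝ) (hE : ∀ u ∈ U, 0 < E u)
    (hconf : ∀ u ∈ U, ∀ i j : Fin 2, ⟪pd i X u, pd j X u⟫ = if i = j then E u else 0)
    (n : EuclideanSpace ℝ (Fin 2) → EuclideanSpace ℝ (Fin 3))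
    (hn : ContDiffOn ℝ 2 n U)
    (hn1 : ∀ u ∈ U, ‖n u‖ = 1)
    (hperp : ∀ u ∈ U, ∀ j : Fin 2, ⟪n u, pd j X u⟫ = 0)
    (K : EuclideanSpace ℝ (Fin 2) → ℝ)
    (hjac : ∀ u ∈ U, ∀ k : Fin 3,
      flatLap (fun w => n w k) u = 2 * K u * E u * n u k) :
    ∀ u ∈ U,
      flatLap (fun w => ⟪X w, n w⟫) u = 2 * K u * E u * ⟪X u, n u⟫ :=
  support_function_is_jacobi_field_general hU X hC hharm E n hn hperp K hjac
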